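/- Let c ∈ ℝ with c ∉ {0, −1}, and let Γ be the Christoffel symbols of the model ℳ₃¹(c) = ℳ(0,0,c,0,0,1+2c), i.e., Γ₁₂¹ = Γ₂₁¹ = c, Γ₂₂² = 1+2c, and all other symbols zero. Then a matrix T ∈ GL(2,ℝ) satisfies (T·Γ)ᵢⱼᵏ = Γᵢⱼᵏ for all i,j,k if and only if T is a diagonal matrix diag(λ, 1) for some λ ≠ 0. -/

import Mathlib

open Matrix

/-- The Christoffel symbols of the Type A model `ℳ(a,b,c,d,e,f)`:
`christoffel a b c d e f i j k` is `Γ_{ij}{}^k` (indices `0,1` for `1,2`). -/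
def christoffel (a b c d e f : ℝ) : Fin 2 → Fin 2 → Fin 2 → ℝ :=
  ![![![a, b], ![c, d]], ![![c, d], ![e, f]]]

/-- The action of `T ∈ GL(2,ℝ)` on constant Christoffel symbols:
`(T·Γ)ᵢⱼᵏ = Σ_{l,m,n} Tᵏ_l Γ_{mn}{}^l (T⁻¹)^m_i (T⁻¹)^n_j`. -/
noncomputable def glAct (T : GL (Fin 2) ℝ) (Γ : Fin 2 → Fin 2 → Fin 2 → ℝ) :
    Fin 2 → Fin 2 → Fin 2 → ℝ := fun i j k =>
  ∑ l : Fin 2, ∑ m : Fin 2, ∑ n : Fin 2,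
    (T : Matrix (Fin 2) (Fin 2) ℝ) k l * Γ m n l *
    ((T⁻¹ : GL (Fin 2) ℝ) : Matrix (Fin 2) (Fin 2) ℝ) m i *
    ((T⁻¹ : GL (Fin 2) ℝ) : Matrix (Fin 2) (Fin 2) ℝ) n j


/-!
Freezing the upper index turns `Γ` into two bilinear forms `Γᵏ`, and `T·Γ = Γ` becomes the
polynomial system `Tᵀ Γᵏ T = Σₗ Tᵏₗ Γˡ`. For `ℳ₃¹(c)` and `T = [[p, q], [r, s]]` this system
forces `c r² = 0`, then `c p (s - 1) = 0` with `p ≠ 0`, and finally `q = 0`.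
-/

lemma Matrix.transpose_mul_mul_eq_iff_of_mul_eq_one {n R : Type*} [Fintype n] [DecidableEq n]
    [CommSemiring R] {A B : Matrix n n R} (hAB : A * B = 1) (hBA : B * A = 1)
    (X Y : Matrix n n R) :
    Bᵀ * Y * B = X ↔ Aᵀ * X * A = Y := by
  constructor <;> rintro rfl
  · rw [← Matrix.mul_assoc, ← Matrix.mul_assoc, ← transpose_mul, hBA, transpose_one,
      Matrix.one_mul, Matrix.mul_assoc, hBA, Matrix.mul_one]
  · rw [← Matrix.mul_assoc, ← Matrix.mul_assoc, ← transpose_mul, hAB, transpose_one,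
      Matrix.one_mul, Matrix.mul_assoc, hAB, Matrix.mul_one]

def christoffelSlice (Γ : Fin 2 → Fin 2 → Fin 2 → ℝ) (k : Fin 2) : Matrix (Fin 2) (Fin 2) ℝ :=
  Matrix.of fun m n => Γ m n k

lemma glAct_apply (T : GL (Fin 2) ℝ) (Γ : Fin 2 → Fin 2 → Fin 2 → ℝ) (i j k : Fin 2) :
    glAct T Γ i j k =
      ((T⁻¹).valᵀ * (∑ l, T.val k l • christoffelSlice Γ l) * (T⁻¹).val) i j := by
  simp only [glAct, christoffelSlice, Matrix.mul_apply, Matrix.add_apply, Matrix.smul_apply,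
    Matrix.of_apply, Matrix.transpose_apply, Fin.sum_univ_two, smul_eq_mul]
  ring

lemma glAct_eq_self_iff (T : GL (Fin 2) ℝ) (Γ : Fin 2 → Fin 2 → Fin 2 → ℝ) :
    glAct T Γ = Γ ↔ ∀ k, T.valᵀ * christoffelSlice Γ k * T.val =
      ∑ l, T.val k l • christoffelSlice Γ l := by
  simp_rw [← transpose_mul_mul_eq_iff_of_mul_eq_one T.mul_inv T.inv_mul, ← Matrix.ext_iff,
    ← glAct_apply, christoffelSlice, Matrix.of_apply, funext_iff]
  exact ⟨fun h k i j => h i j k, fun h i j k => h k i j⟩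

lemma christoffel_M31_isotropy_iff {c p q r s : ℝ} (hc : c ≠ 0) (hdet : p * s - q * r ≠ 0) :
    (∀ k, (!![p, q; r, s])ᵀ * christoffelSlice (christoffel 0 0 c 0 0 (1 + 2 * c)) k *
        !![p, q; r, s] =
      ∑ l, !![p, q; r, s] k l • christoffelSlice (christoffel 0 0 c 0 0 (1 + 2 * c)) l) ↔
      q = 0 ∧ r = 0 ∧ s = 1 := by
  simp only [Fin.forall_fin_two, ← Matrix.ext_iff, Fin.sum_univ_two, christoffelSlice,
    christoffel, Matrix.mul_apply, Matrix.transpose_apply, Matrix.add_apply, Matrix.smul_apply,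
    Matrix.of_apply, cons_val', cons_val_zero, cons_val_one, empty_val', cons_val_fin_one,
    smul_eq_mul, mul_zero, zero_mul, add_zero, zero_add]
  constructor
  · rintro ⟨⟨⟨-, h01⟩, -, h11⟩, ⟨hrr, hrs⟩, -, -⟩
    have hr : r = 0 := by
      have : c * r ^ 2 = 0 := by linear_combination s * hrr - r * hrs
      simpa [hc] using this
    subst hr
    have hp : p ≠ 0 := left_ne_zero_of_mul (by simpa using hdet)
    have hs : s = 1 := by
      have : p * c * (s - 1) = 0 := by linear_combination h01
      simpa [hp, hc, sub_eq_zero] using this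
    subst hs
    exact ⟨by linear_combination -h11, rfl, rfl⟩
  · rintro ⟨rfl, rfl, rfl⟩
    norm_num [mul_comm]

theorem stmt_9 (c : ℝ) (hc : c ∉ ({0, -1} : Set ℝ)) (T : GL (Fin 2) ℝ) :
    glAct T (christoffel 0 0 c 0 0 (1 + 2*c)) = christoffel 0 0 c 0 0 (1 + 2*c) ↔
      ∃ l : ℝ, l ≠ 0 ∧ (T : Matrix (Fin 2) (Fin 2) ℝ) = !![l, 0; 0, 1] := by
  have hc0 : c ≠ 0 := fun h => hc (Or.inl h)
  obtain ⟨p, q, r, s, hT⟩ : ∃ p q r s, (T : Matrix (Fin 2) (Fin 2) ℝ) = !![p, q; r, s] :=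
    ⟨_, _, _, _, eta_fin_two _⟩
  have hdet : p * s - q * r ≠ 0 := by
    simpa [hT, det_fin_two_of] using T.det_ne_zero
  rw [glAct_eq_self_iff, hT, christoffel_M31_isotropy_iff hc0 hdet]
  constructor
  · rintro ⟨rfl, rfl, rfl⟩
    exact ⟨p, by simpa using hdet, rfl⟩
  · rintro ⟨l, -, hl⟩
    have hentry := congr_fun₂ hl
    exact ⟨by simpa using hentry 0 1, by simpa using hentry 1 0, by simpa using hentry 1 1⟩
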